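/- Let f : A ⟶ B be a morphism in a dagger category with a polar decomposition f = p ∘ i = j ∘ p, where p is a partial isometry and i, j are self-adjoint bimorphisms. If g : A ⟶ A is self-adjoint and commutes with f† ∘ f, then g commutes with p† ∘ p. -/
import Mathlib


open CategoryTheory

universe v u v₁ u₁ v₂ u₂

class DaggerCategory (C : Type u) [Category.{v} C] where
  dag : ∀ {A B : C}, (A ⟶ B) → (B ⟶ A)
  dag_id : ∀ (A : C), dag (𝟙 A) = 𝟙 A
  dag_comp : ∀ {A B X : C} (f : A ⟶ B) (g : B ⟶ X), dag (f ≫ g) = dag g ≫ dag f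
  dag_dag : ∀ {A B : C} (f : A ⟶ B), dag (dag f) = f

postfix:max "†" => DaggerCategory.dag

section Defs

variable {C : Type u} [Category.{v} C] [DaggerCategory C]

/-- A morphism `f` is a partial isometry if `f ∘ f† ∘ f = f`. -/
def IsPartialIsometry {A B : C} (f : A ⟶ B) : Prop :=
  f ≫ f† ≫ f = f

/-- A morphism `f : A ⟶ B` is unitary if `f† ∘ f = 𝟙 A` and `f ∘ f† = 𝟙 B`. -/
def IsUnitary {A B : C} (f : A ⟶ B) : Prop :=
  f ≫ f† = 𝟙 A ∧ f† ≫ f = 𝟙 B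

/-- A morphism `f` is dagger monic (an isometry) if `f† ∘ f = 𝟙`. -/
def DaggerMonic {A B : C} (f : A ⟶ B) : Prop :=
  f ≫ f† = 𝟙 A

/-- `(L, l)` is a limit cone over the diagram `D`. -/
def IsLimitCone {J : Type u₁} [Category.{v₁} J] (D : J ⥤ C) (L : C)
    (l : ∀ j : J, L ⟶ D.obj j) : Prop :=
  (∀ {j j' : J} (f : j ⟶ j'), l j ≫ D.map f = l j') ∧
  (∀ (M : C) (m : ∀ j : J, M ⟶ D.obj j),
    (∀ {j j' : J} (f : j ⟶ j'), m j ≫ D.map f = m j') →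
    ∃! g : M ⟶ L, ∀ j : J, g ≫ l j = m j)

/-- A class of objects `Ω` is weakly initial when every object admits a morphism
from some member of `Ω`. -/
def WeaklyInitial {J : Type u₁} [Category.{v₁} J] (Ω : Set J) : Prop :=
  ∀ B : J, ∃ A ∈ Ω, Nonempty (A ⟶ B)

/-- `(L, l)` is a dagger limit of `(D, Ω)`: a limit cone whose legs at `Ω` are
partial isometries with pairwise commuting induced projections. -/
def IsDaggerLimit {J : Type u₁} [Category.{v₁} J] (D : J ⥤ C) (Ω : Set J) (L : C)
    (l : ∀ j : J, L ⟶ D.obj j) : Prop :=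
  IsLimitCone D L l ∧
  (∀ j ∈ Ω, IsPartialIsometry (l j)) ∧
  (∀ j ∈ Ω, ∀ j' ∈ Ω,
    (l j ≫ (l j)†) ≫ (l j' ≫ (l j')†) = (l j' ≫ (l j')†) ≫ (l j ≫ (l j)†))

end Defs

/-- If `f = p ∘ i = j ∘ p` is a polar decomposition of `f : A ⟶ B` (with
`p` a partial isometry and `i`, `j` self-adjoint bimorphisms) and `g : A ⟶ A` is self-adjoint
and commutes with `f† ∘ f`, then `g` commutes with `p† ∘ p`. -/
theorem selfAdjoint_commutes_polar {C : Type u} [Category.{v} C] [DaggerCategory C]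
    {A B : C} (f p : A ⟶ B) (i : A ⟶ A) (j : B ⟶ B)
    (hp : IsPartialIsometry p) (hi : i† = i) (hj : j† = j)
    (hiMono : Mono i) (hiEpi : Epi i) (hjMono : Mono j) (hjEpi : Epi j)
    (hfi : f = i ≫ p) (hfj : f = p ≫ j)
    (g : A ⟶ A) (hg : g† = g)
    (hcomm : g ≫ (f ≫ f†) = (f ≫ f†) ≫ g) :
    g ≫ (p ≫ p†) = (p ≫ p†) ≫ g := by
  have hfd : f† = p† ≫ i := by rw [hfi, DaggerCategory.dag_comp, hi]
  have hfd' : f† = j ≫ p† := by rw [hfj, DaggerCategory.dag_comp, hj]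
  -- i commutes with p ≫ p†
  have hie : i ≫ p ≫ p† = p ≫ p† ≫ i := by
    have h1 : i ≫ p = p ≫ j := by rw [← hfi, hfj]
    have h2 : i ≫ p ≫ p† = p ≫ f† := by
      rw [hfd', ← Category.assoc, h1, Category.assoc]
    rw [h2, hfd]
  have hie' := reassoc_of% hie
  have hei : p ≫ p† ≫ i = i ≫ p ≫ p† := hie.symm
  have hei' := reassoc_of% hei
  -- idempotence of p ≫ p†
  have hp' : p ≫ p† ≫ p = p := hp
  have hpr := reassoc_of% hp'
  have he2 : p ≫ p† ≫ p ≫ p† = p ≫ p† := by rw [hpr]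
  have he2' := reassoc_of% he2
  -- f ≫ f† = i ≫ i ≫ p ≫ p†
  have hff : f ≫ f† = i ≫ i ≫ p ≫ p† := by
    rw [hfd, hfi]
    simp only [Category.assoc]
    rw [← hie]
  have hcomm' : g ≫ i ≫ i ≫ p ≫ p† = i ≫ i ≫ p ≫ p† ≫ g := by
    have h := hcomm
    rw [hff] at h
    simpa using h
  have hcommr := reassoc_of% hcomm'
  -- the commuting relation in the "i pushed right" normal form
  have grelA : p ≫ p† ≫ i ≫ i ≫ g = g ≫ p ≫ p† ≫ i ≫ i := by
    have h := hcomm'.symm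
    simp only [Category.assoc, hie', hie] at h
    exact h
  have grelA' := reassoc_of% grelA
  -- (p≫p†) ≫ g ≫ (p≫p†) = (p≫p†) ≫ g (via Epi i twice)
  have key1 : (p ≫ p†) ≫ g ≫ (p ≫ p†) = (p ≫ p†) ≫ g := by
    have h : i ≫ i ≫ ((p ≫ p†) ≫ g ≫ (p ≫ p†)) = i ≫ i ≫ ((p ≫ p†) ≫ g) := by
      simp only [Category.assoc, hie', hie, grelA', grelA, he2', he2]
    exact (cancel_epi i).mp ((cancel_epi i).mp h)
  -- (p≫p†) ≫ g ≫ (p≫p†) = g ≫ (p≫p†) (via Mono i twice)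
  have key2 : (p ≫ p†) ≫ g ≫ (p ≫ p†) = g ≫ (p ≫ p†) := by
    have h : (((p ≫ p†) ≫ g ≫ (p ≫ p†)) ≫ i) ≫ i = ((g ≫ (p ≫ p†)) ≫ i) ≫ i := by
      simp only [Category.assoc, hei', hei, hcommr, hcomm', he2', he2]
    exact (cancel_mono i).mp ((cancel_mono i).mp h)
  rw [← key2, key1]
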